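/- arXiv:1406.7317 — 5 statements merged into one kernel-verified Lean document; each statement's English description precedes it below -/
import Mathlib

section
/- For every n ≥ 1 and every 0 ≤ j ≤ n, ∑_{k=0}^{n} c_{n,k}(j) = n!, where c_{n,k}(j) = ∑_{i=0}^{k} (-1)^i (k+1-i)^{n-j} (k-i)^j C(n+1,i). -/
open Finset

/-- Number of weak excedances of a permutation of [n] (indices i with p_i ≥ i). -/
def wexc (n : ℕ) (π : Equiv.Perm (Fin n)) : ℕ :=
  (Finset.univ.filter (fun i : Fin n => (i : ℕ) ≤ (π i : ℕ))).card

/-- Number of ascents of a permutation of [n] (indices i < n with p_i < p_{i+1}). -/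
def asc (n : ℕ) (π : Equiv.Perm (Fin n)) : ℕ :=
  (Finset.univ.filter (fun i : Fin n => ∃ j : Fin n, (j : ℕ) = (i : ℕ) + 1 ∧ π i < π j)).card

/-- Eulerian number: number of permutations of [n] with exactly k weak excedances. -/
def eulerian (n k : ℕ) : ℕ :=
  (Finset.univ.filter (fun π : Equiv.Perm (Fin n) => wexc n π = k)).card

/-- The coefficient c_{n,k}(j). -/
def c (n k j : ℕ) : ℤ :=
  ∑ i ∈ Finset.range (k + 1),
    (-1 : ℤ) ^ i * ((k + 1 - i : ℕ) : ℤ) ^ (n - j) * ((k - i : ℕ) : ℤ) ^ j * ((n + 1).choose i)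

lemma neg_one_pow_sub {k m : ℕ} (h : m ≤ k) : (-1:ℤ)^(k-m) = (-1)^(k+m) := by
  have e : k + m = (k - m) + 2*m := by omega
  rw [e, pow_add, pow_mul]
  norm_num

lemma alt (N : ℕ) : ∀ t, ∑ i ∈ Finset.range (t+1), (-1:ℤ)^i * ((N+1).choose i) = (-1)^t * (N.choose t) := by
  intro t
  induction t with
  | zero => simp
  | succ t ih =>
    rw [Finset.sum_range_succ, ih, Nat.choose_succ_succ]
    push_cast
    ring


lemma K : ∀ n : ℕ, ∀ s ≤ n, ∑ m ∈ Finset.range (n+1), (-1:ℤ)^(n+m) * (n.choose m) * (m:ℤ)^s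
    = if s = n then (n.factorial : ℤ) else 0 := by
  intro n
  induction n with
  | zero =>
    intro s hs
    interval_cases s
    simp
  | succ n ih =>
    intro s hs
    have step : ∑ m ∈ Finset.range (n+2), (-1:ℤ)^(n+1+m) * ((n+1).choose m) * (m:ℤ)^s
        = ∑ m ∈ Finset.range (n+1), (-1:ℤ)^(n+m) * (n.choose m) * (((m:ℤ)+1)^s - (m:ℤ)^s) := by
      have hR : ∑ m ∈ Finset.range (n+1), (-1:ℤ)^(n+m) * (n.choose m) * (((m:ℤ)+1)^s - (m:ℤ)^s)
          = (∑ m ∈ Finset.range (n+1), (-1:ℤ)^(n+m) * (n.choose m) * ((m:ℤ)+1)^s)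
            - ∑ m ∈ Finset.range (n+1), (-1:ℤ)^(n+m) * (n.choose m) * (m:ℤ)^s := by
        rw [← Finset.sum_sub_distrib]
        apply Finset.sum_congr rfl
        intro m _; ring
      have hsum : ∑ m ∈ Finset.range (n+1), (-1:ℤ)^(n+(m+1)) * (n.choose (m+1)) * ((m+1:ℕ):ℤ)^s
          = ∑ m ∈ Finset.range n, (-1:ℤ)^(n+(m+1)) * (n.choose (m+1)) * ((m+1:ℕ):ℤ)^s := by
        rw [Finset.sum_range_succ, Nat.choose_succ_self]
        simp
      have key : ∀ m ∈ Finset.range (n+1),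
          (-1:ℤ)^(n+1+(m+1)) * ((n+1).choose (m+1)) * ((m+1:ℕ):ℤ)^s
          = ((-1:ℤ)^(n+m) * (n.choose m) * ((m:ℤ)+1)^s
              - (-1:ℤ)^(n+(m+1)) * (n.choose (m+1)) * ((m+1:ℕ):ℤ)^s) := by
        intro m _
        rw [Nat.choose_succ_succ]
        push_cast
        ring
      rw [hR]
      rw [Finset.sum_range_succ' (fun m => (-1:ℤ)^(n+1+m) * ((n+1).choose m) * (m:ℤ)^s)]
      rw [Finset.sum_range_succ' (fun m => (-1:ℤ)^(n+m) * (n.choose m) * (m:ℤ)^s)]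
      rw [← hsum]
      rw [Finset.sum_congr rfl key, Finset.sum_sub_distrib]
      push_cast [Nat.choose_zero_right]
      ring
    rw [step]
    have expand : ∀ m : ℤ, (m+1)^s - m^s = ∑ t ∈ Finset.range s, m^t * (s.choose t) := by
      intro m
      have h := add_pow m 1 s
      simp only [one_pow, mul_one] at h
      rw [h, Finset.sum_range_succ]
      simp
    calc ∑ m ∈ Finset.range (n+1), (-1:ℤ)^(n+m) * (n.choose m) * (((m:ℤ)+1)^s - (m:ℤ)^s)
        = ∑ m ∈ Finset.range (n+1), ∑ t ∈ Finset.range s,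
            ((-1:ℤ)^(n+m) * (n.choose m) * (m:ℤ)^t) * (s.choose t) := by
          apply Finset.sum_congr rfl
          intro m _
          rw [expand, Finset.mul_sum]
          apply Finset.sum_congr rfl
          intro t _; ring
      _ = ∑ t ∈ Finset.range s, ∑ m ∈ Finset.range (n+1),
            ((-1:ℤ)^(n+m) * (n.choose m) * (m:ℤ)^t) * (s.choose t) := Finset.sum_comm
      _ = ∑ t ∈ Finset.range s, (if t = n then (n.factorial : ℤ) else 0) * (s.choose t) := by
          apply Finset.sum_congr rfl
          intro t ht
          have ht' := Finset.mem_range.mp ht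
          rw [← Finset.sum_mul, ih t (by omega)]
      _ = if s = n + 1 then ((n+1).factorial : ℤ) else 0 := by
          simp only [ite_mul, zero_mul]
          rw [Finset.sum_ite_eq' (Finset.range s) n]
          by_cases hcase : s = n + 1
          · subst hcase
            simp [Nat.choose_succ_self_right, Nat.factorial_succ]
            ring
          · have hnot : n ∉ Finset.range s := by simp; omega
            simp [hnot, hcase]

theorem stmt7 (n j : ℕ) (hn : 1 ≤ n) (hj : j ≤ n) :
    ∑ k ∈ Finset.range (n + 1), c n k j = (n.factorial : ℤ) := by
  -- Step 1: reindex c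
  have hc : ∀ k, c n k j = ∑ m ∈ Finset.range (k+1),
      (-1:ℤ)^(k+m) * ((m+1:ℕ):ℤ)^(n-j) * ((m:ℕ):ℤ)^j * ((n+1).choose (k-m)) := by
    intro k
    rw [c, ← Finset.sum_range_reflect]
    apply Finset.sum_congr rfl
    intro m hm
    have hm' := Finset.mem_range.mp hm
    have e0 : k + 1 - 1 - m = k - m := by omega
    have e1 : k + 1 - (k - m) = m + 1 := by omega
    have e2 : k - (k - m) = m := by omega
    rw [e0, e1, e2, neg_one_pow_sub (by omega : m ≤ k)]
  -- Step 2: extend inner sum and swap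
  have hswap : ∑ k ∈ Finset.range (n+1), c n k j
      = ∑ m ∈ Finset.range (n+1), ∑ k ∈ Finset.range (n+1),
          (if m ≤ k then (-1:ℤ)^(k+m) * ((m+1:ℕ):ℤ)^(n-j) * ((m:ℕ):ℤ)^j * ((n+1).choose (k-m)) else 0) := by
    rw [Finset.sum_comm]
    apply Finset.sum_congr rfl
    intro k hk
    have hk' := Finset.mem_range.mp hk
    rw [hc k, ← Finset.sum_filter]
    apply Finset.sum_congr
    · ext m
      simp only [Finset.mem_filter, Finset.mem_range]
      omega
    · intro m _; rfl
  rw [hswap]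
  -- Step 3: compute inner sum over k
  have hinner : ∀ m ∈ Finset.range (n+1), ∑ k ∈ Finset.range (n+1),
      (if m ≤ k then (-1:ℤ)^(k+m) * ((m+1:ℕ):ℤ)^(n-j) * ((m:ℕ):ℤ)^j * ((n+1).choose (k-m)) else 0)
      = ((m+1:ℕ):ℤ)^(n-j) * ((m:ℕ):ℤ)^j * ((-1:ℤ)^(n+m) * (n.choose m)) := by
    intro m hm
    have hm' := Finset.mem_range.mp hm
    have h1 : ∑ k ∈ Finset.range (n+1),
        (if m ≤ k then (-1:ℤ)^(k+m) * ((m+1:ℕ):ℤ)^(n-j) * ((m:ℕ):ℤ)^j * ((n+1).choose (k-m)) else 0)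
        = ∑ k ∈ Finset.Ico m (n+1), (-1:ℤ)^(k+m) * ((m+1:ℕ):ℤ)^(n-j) * ((m:ℕ):ℤ)^j * ((n+1).choose (k-m)) := by
      rw [← Finset.sum_filter]
      apply Finset.sum_congr
      · ext k
        simp only [Finset.mem_filter, Finset.mem_range, Finset.mem_Ico]
        omega
      · intro k _; rfl
    rw [h1, Finset.sum_Ico_eq_sum_range]
    have e3 : n + 1 - m = (n - m) + 1 := by omega
    rw [e3]
    have h2 : ∀ i ∈ Finset.range ((n-m)+1),
        (-1:ℤ)^(m+i+m) * ((m+1:ℕ):ℤ)^(n-j) * ((m:ℕ):ℤ)^j * ((n+1).choose (m+i-m))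
        = ((m+1:ℕ):ℤ)^(n-j) * ((m:ℕ):ℤ)^j * ((-1:ℤ)^i * ((n+1).choose i)) := by
      intro i _
      have e4 : m + i - m = i := by omega
      have e5 : (-1:ℤ)^(m+i+m) = (-1)^i := by
        have : m + i + m = i + 2*m := by omega
        rw [this, pow_add, pow_mul]; norm_num
      rw [e4, e5]; ring
    rw [Finset.sum_congr rfl h2, ← Finset.mul_sum, alt n (n-m)]
    rw [Nat.choose_symm (by omega : m ≤ n), neg_one_pow_sub (by omega : m ≤ n)]
  rw [Finset.sum_congr rfl hinner]
  -- Step 4: expand (m+1)^(n-j) and finish with K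
  calc ∑ m ∈ Finset.range (n+1), ((m+1:ℕ):ℤ)^(n-j) * ((m:ℕ):ℤ)^j * ((-1:ℤ)^(n+m) * (n.choose m))
      = ∑ m ∈ Finset.range (n+1), ∑ t ∈ Finset.range ((n-j)+1),
          (((n-j).choose t : ℕ):ℤ) * ((-1:ℤ)^(n+m) * (n.choose m) * ((m:ℕ):ℤ)^(t+j)) := by
        apply Finset.sum_congr rfl
        intro m _
        have hme : ((m+1:ℕ):ℤ) = (m:ℤ)+1 := by push_cast; ring
        rw [hme]
        have h := add_pow (m:ℤ) 1 (n-j)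
        simp only [one_pow, mul_one] at h
        rw [h, Finset.sum_mul, Finset.sum_mul]
        apply Finset.sum_congr rfl
        intro t _
        rw [pow_add]
        ring
    _ = ∑ t ∈ Finset.range ((n-j)+1), (((n-j).choose t : ℕ):ℤ) *
          ∑ m ∈ Finset.range (n+1), (-1:ℤ)^(n+m) * (n.choose m) * ((m:ℕ):ℤ)^(t+j) := by
        rw [Finset.sum_comm]
        apply Finset.sum_congr rfl
        intro t _
        rw [Finset.mul_sum]
    _ = ∑ t ∈ Finset.range ((n-j)+1), (((n-j).choose t : ℕ):ℤ) *
          (if t + j = n then (n.factorial : ℤ) else 0) := by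
        apply Finset.sum_congr rfl
        intro t ht
        have ht' := Finset.mem_range.mp ht
        rw [K n (t+j) (by omega)]
    _ = (n.factorial : ℤ) := by
        have hfin : ∀ t ∈ Finset.range ((n-j)+1),
            (((n-j).choose t : ℕ):ℤ) * (if t + j = n then (n.factorial : ℤ) else 0)
            = if t = n - j then (n.factorial : ℤ) else 0 := by
          intro t ht
          have ht' := Finset.mem_range.mp ht
          by_cases h : t = n - j
          · subst h
            have : n - j + j = n := by omega
            simp [this]
          · have hne : ¬(t + j = n) := by omega
            simp [h, hne]
        rw [Finset.sum_congr rfl hfin, Finset.sum_ite_eq' (Finset.range ((n-j)+1)) (n-j)]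
        simp
end

section
/- For any positive integer n and all 0 ≤ j, k ≤ n, the following binomial identity holds: ∑_{i=0}^{k} (-1)^i (k+1-i)^{n-j} (k-i)^j C(n+1,i) = ∑_{l=0}^{n-k} (-1)^l (n+1-k-l)^j (n-k-l)^{n-j} C(n+1,l). -/
open Finset

lemma fwdDiff_poly_eval : ∀ (d : ℕ) (p : Polynomial ℤ), p.natDegree ≤ d →
    (fwdDiff (1:ℤ))^[d+1] (fun x : ℤ => p.eval x) = 0 := by
  intro d
  induction d with
  | zero =>
    intro p hp
    rw [Polynomial.eq_C_of_natDegree_le_zero hp]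
    funext x; simp [fwdDiff]
  | succ d IH =>
    intro p hp
    have hΔ : fwdDiff (1:ℤ) (fun x : ℤ => p.eval x)
        = fun x : ℤ => (p.comp (Polynomial.X + 1) - p).eval x := by
      funext x
      simp [fwdDiff, Polynomial.eval_comp]
    rw [Function.iterate_succ_apply, hΔ]
    apply IH
    by_cases hq : p.comp (Polynomial.X + 1) - p = 0
    · simp [hq]
    have hp0 : p ≠ 0 := by rintro rfl; simp at hq
    have hX1 : (Polynomial.X + 1 : Polynomial ℤ).natDegree = 1 := by
      simpa using Polynomial.natDegree_X_add_C (1:ℤ)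
    have hlc : (p.comp (Polynomial.X + 1)).leadingCoeff = p.leadingCoeff := by
      rw [Polynomial.leadingCoeff_comp (by rw [hX1]; norm_num)]
      simp [show (Polynomial.X + 1 : Polynomial ℤ) = Polynomial.X + Polynomial.C 1 by simp, Polynomial.leadingCoeff_X_add_C]
    have hcomp0 : p.comp (Polynomial.X + 1) ≠ 0 := by
      intro h
      exact hp0 (Polynomial.leadingCoeff_eq_zero.mp (by rw [← hlc, h, Polynomial.leadingCoeff_zero]))
    have hdeg : (p.comp (Polynomial.X + 1)).degree = p.degree := by
      rw [Polynomial.degree_eq_natDegree hcomp0, Polynomial.degree_eq_natDegree hp0,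
        Polynomial.natDegree_comp, hX1, mul_one]
    have hlt : (p.comp (Polynomial.X + 1) - p).degree < p.degree :=
      hdeg ▸ Polynomial.degree_sub_lt hdeg hcomp0 hlc
    have : (p.comp (Polynomial.X + 1) - p).natDegree < p.natDegree :=
      Polynomial.natDegree_lt_natDegree hq hlt
    omega


lemma full_sum (n j k : ℕ) (hj : j ≤ n) :
    ∑ i ∈ Finset.range (n + 2), (-1 : ℤ) ^ i * ((n + 1).choose i) *
      (((k : ℤ) + 1 - i) ^ (n - j) * ((k : ℤ) - i) ^ j) = 0 := by
  set g : Polynomial ℤ := Polynomial.X ^ (n - j) * (Polynomial.X - 1) ^ j with hg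
  have hdeg : g.natDegree ≤ n := by
    refine le_trans (Polynomial.natDegree_mul_le) ?_
    have h1 : (Polynomial.X ^ (n-j) : Polynomial ℤ).natDegree ≤ n - j := by
      simp [Polynomial.natDegree_X_pow]
    have h2 : ((Polynomial.X - 1 : Polynomial ℤ) ^ j).natDegree ≤ j := by
      refine le_trans (Polynomial.natDegree_pow_le) ?_
      have : (Polynomial.X - 1 : Polynomial ℤ).natDegree ≤ 1 := by
        simpa using (Polynomial.natDegree_X_sub_C (1:ℤ)).le
      calc j * (Polynomial.X - 1 : Polynomial ℤ).natDegree ≤ j * 1 :=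
            Nat.mul_le_mul_left j this
        _ = j := mul_one j
    omega
  have hzero := fwdDiff_poly_eval n g hdeg
  have hsum := fwdDiff_iter_eq_sum_shift (1:ℤ) (fun x : ℤ => g.eval x) (n+1) ((k : ℤ) - n)
  rw [hzero] at hsum
  have hsum' : ∑ m ∈ Finset.range (n + 2),
      ((-1:ℤ) ^ (n + 1 - m) * ((n+1).choose m)) * g.eval ((k : ℤ) - n + m) = 0 := by
    have hs0 : (0 : ℤ → ℤ) ((k:ℤ) - n) = 0 := rfl
    rw [hsum] at hs0
    rw [← hs0]
    apply Finset.sum_congr rfl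
    intro m _
    rw [zsmul_eq_mul]
    push_cast
    ring_nf
  -- reflect the sum
  have hrefl := Finset.sum_range_reflect
    (fun m => ((-1:ℤ) ^ (n + 1 - m) * ((n+1).choose m)) * g.eval ((k : ℤ) - n + m)) (n + 2)
  rw [← hrefl] at hsum'
  rw [← hsum']
  apply Finset.sum_congr rfl
  intro i hi
  rw [Finset.mem_range] at hi
  have hi' : i ≤ n + 1 := by omega
  have e1 : n + 2 - 1 - i = n + 1 - i := by omega
  have e2 : n + 1 - (n + 1 - i) = i := by omega
  have e3 : (n+1).choose (n + 1 - i) = (n+1).choose i := Nat.choose_symm hi'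
  simp only [e1, e2, e3]
  have e4 : ((n + 1 - i : ℕ) : ℤ) = (n : ℤ) + 1 - i := by
    push_cast [Nat.cast_sub hi']; ring
  rw [e4, hg]
  simp only [Polynomial.eval_mul, Polynomial.eval_pow, Polynomial.eval_sub, Polynomial.eval_X,
    Polynomial.eval_one]
  ring_nf


theorem stmt9 (n j k : ℕ) (hn : 1 ≤ n) (hj : j ≤ n) (hk : k ≤ n) :
    ∑ i ∈ Finset.range (k + 1),
        (-1 : ℤ) ^ i * ((k + 1 - i : ℕ) : ℤ) ^ (n - j) * ((k - i : ℕ) : ℤ) ^ j * ((n + 1).choose i) =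
      ∑ l ∈ Finset.range (n - k + 1),
        (-1 : ℤ) ^ l * ((n + 1 - k - l : ℕ) : ℤ) ^ j * ((n - k - l : ℕ) : ℤ) ^ (n - j) *
          ((n + 1).choose l) := by
  set F : ℕ → ℤ := fun i => (-1 : ℤ) ^ i * ((n + 1).choose i) *
      (((k : ℤ) + 1 - i) ^ (n - j) * ((k : ℤ) - i) ^ j) with hF
  have hfull : ∑ i ∈ Finset.range (n + 2), F i = 0 := full_sum n j k hj
  have hsplit : ∑ i ∈ Finset.Ico 0 (k+1), F i + ∑ i ∈ Finset.Ico (k+1) (n+2), F i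
      = ∑ i ∈ Finset.Ico 0 (n+2), F i :=
    Finset.sum_Ico_consecutive F (Nat.zero_le (k+1)) (by omega)
  rw [Finset.range_eq_Ico] at hfull
  rw [hfull] at hsplit
  rw [← Finset.range_eq_Ico] at hsplit
  -- LHS equals first chunk
  have hL : ∑ i ∈ Finset.range (k + 1),
      (-1 : ℤ) ^ i * ((k + 1 - i : ℕ) : ℤ) ^ (n - j) * ((k - i : ℕ) : ℤ) ^ j * ((n + 1).choose i)
      = ∑ i ∈ Finset.range (k+1), F i := by
    apply Finset.sum_congr rfl
    intro i hi
    rw [Finset.mem_range] at hi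
    have h1 : i ≤ k := by omega
    rw [hF]
    simp only []
    rw [Nat.cast_sub (by omega : i ≤ k + 1), Nat.cast_sub h1]
    push_cast
    ring
  -- second chunk is minus RHS
  have hR : ∑ i ∈ Finset.Ico (k+1) (n+2), F i
      = ∑ l ∈ Finset.range (n - k + 1), -((-1 : ℤ) ^ l * ((n + 1 - k - l : ℕ) : ℤ) ^ j *
          ((n - k - l : ℕ) : ℤ) ^ (n - j) * ((n + 1).choose l)) := by
    refine Finset.sum_nbij' (fun i => n + 1 - i) (fun l => n + 1 - l) ?_ ?_ ?_ ?_ ?_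
    · intro i hi
      simp only [Finset.mem_Ico] at hi
      rw [Finset.mem_range]
      try dsimp only
      omega
    · intro l hl
      rw [Finset.mem_range] at hl
      simp only [Finset.mem_Ico]
      try dsimp only
      omega
    · intro i hi
      simp only [Finset.mem_Ico] at hi
      try dsimp only
      omega
    · intro l hl
      rw [Finset.mem_range] at hl
      try dsimp only
      omega
    · intro i hi
      simp only [Finset.mem_Ico] at hi
      rw [hF]
      simp only []
      set l := n + 1 - i with hl
      have hil : i = n + 1 - l := by omega
      have hl1 : l ≤ n - k := by omega
      -- casts
      have c1 : ((n + 1 - k - l : ℕ) : ℤ) = (n : ℤ) + 1 - k - l := by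
        have : (n + 1 - k - l : ℕ) = n + 1 - k - l := rfl
        push_cast [Nat.cast_sub (show l ≤ n + 1 - k by omega), Nat.cast_sub (show k ≤ n + 1 by omega)]
        ring
      have c2 : ((n - k - l : ℕ) : ℤ) = (n : ℤ) - k - l := by
        push_cast [Nat.cast_sub (show l ≤ n - k by omega), Nat.cast_sub (show k ≤ n by omega)]
        ring
      have ci : ((i : ℤ)) = (n : ℤ) + 1 - l := by omega
      have cchoose : (n + 1).choose i = (n + 1).choose l := by
        rw [hil, Nat.choose_symm (by omega)]
      have csign : (-1 : ℤ) ^ i = (-1 : ℤ) ^ (n + 1) * (-1 : ℤ) ^ l := by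
        have h1 : (-1 : ℤ) ^ i * (-1 : ℤ) ^ l = (-1 : ℤ) ^ (n + 1) := by
          rw [← pow_add]
          congr 1
          omega
        have h2 : (-1 : ℤ) ^ l * (-1 : ℤ) ^ l = 1 := by
          rw [← pow_add]
          exact Even.neg_one_pow ⟨l, rfl⟩
        calc (-1 : ℤ) ^ i = (-1 : ℤ) ^ i * ((-1 : ℤ) ^ l * (-1 : ℤ) ^ l) := by rw [h2, mul_one]
          _ = (-1 : ℤ) ^ (n + 1) * (-1 : ℤ) ^ l := by rw [← mul_assoc, h1]
      rw [cchoose, csign, ci]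
      have e1 : (k : ℤ) + 1 - ((n : ℤ) + 1 - l) = -((n : ℤ) - k - l) := by ring
      have e2 : (k : ℤ) - ((n : ℤ) + 1 - l) = -((n : ℤ) + 1 - k - l) := by ring
      have p1 : (-((n : ℤ) - k - l)) ^ (n - j) = (-1 : ℤ) ^ (n - j) * ((n : ℤ) - k - l) ^ (n - j) :=
        neg_pow _ _
      have p2 : (-((n : ℤ) + 1 - k - l)) ^ j = (-1 : ℤ) ^ j * ((n : ℤ) + 1 - k - l) ^ j :=
        neg_pow _ _
      rw [e1, e2, p1, p2, ← c1, ← c2]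
      have hsgn : (-1 : ℤ) ^ (n + 1) * ((-1 : ℤ) ^ (n - j) * (-1 : ℤ) ^ j) = -1 := by
        rw [← pow_add, ← pow_add]
        have : n + 1 + (n - j + j) = 2 * n + 1 := by omega
        rw [this]
        exact Odd.neg_one_pow ⟨n, by ring⟩
      calc (-1:ℤ) ^ (n+1) * (-1:ℤ)^l * ((n+1).choose l) *
            ((-1:ℤ)^(n-j) * ((n-k-l : ℕ):ℤ)^(n-j) * ((-1:ℤ)^j * ((n+1-k-l : ℕ):ℤ)^j))
          = ((-1:ℤ)^(n+1) * ((-1:ℤ)^(n-j) * (-1:ℤ)^j)) *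
            ((-1:ℤ)^l * ((n+1-k-l : ℕ):ℤ)^j * ((n-k-l : ℕ):ℤ)^(n-j) * ((n+1).choose l)) := by ring
        _ = -((-1:ℤ)^l * ((n+1-k-l : ℕ):ℤ)^j * ((n-k-l : ℕ):ℤ)^(n-j) * ((n+1).choose l)) := by
            rw [hsgn]; ring
  rw [hL]
  rw [hR, Finset.sum_neg_distrib] at hsplit
  linarith [hsplit]
end

section
/- For every positive integer n and all 1 ≤ k, j ≤ n, the number of permutations of [n] with exactly k weak excedances in which n occupies position j equals the number of permutations of [n] with exactly n+1-k weak excedances in which n occupies position n+1-j. -/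
open Finset

def FF (m : ℕ) (π : Equiv.Perm (Fin (m+1))) : Equiv.Perm (Fin (m+1)) :=
  Fin.revPerm * finRotate (m+1) * π * Fin.revPerm

lemma FF_apply (m : ℕ) (π : Equiv.Perm (Fin (m+1))) (i : Fin (m+1)) :
    FF m π i = Fin.rev (finRotate (m+1) (π (Fin.rev i))) := rfl

lemma rot_val (m : ℕ) (x : Fin (m+1)) :
    ((finRotate (m+1) x : Fin (m+1)) : ℕ) = if (x:ℕ) = m then 0 else (x:ℕ)+1 := by
  rw [finRotate_succ_apply, Fin.val_add_one]
  simp [Fin.ext_iff]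

lemma FF_invol (m : ℕ) (π : Equiv.Perm (Fin (m+1))) : FF m (FF m π) = π := by
  ext i
  simp only [FF_apply, Fin.rev_rev]
  have h1 := rot_val m (π i)
  have h2 := rot_val m (Fin.rev (finRotate (m+1) (π i)))
  rw [Fin.val_rev] at *
  rw [h2, h1]
  have := (π i).is_lt
  have := i.is_lt
  split_ifs <;> omega

lemma wexc_le (n : ℕ) (π : Equiv.Perm (Fin n)) : wexc n π ≤ n := by
  unfold wexc
  calc _ ≤ (Finset.univ : Finset (Fin n)).card := Finset.card_filter_le _ _
  _ = n := by simp

lemma wexc_FF (m : ℕ) (π : Equiv.Perm (Fin (m+1))) :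
    wexc (m+1) (FF m π) = (m+1) + 1 - wexc (m+1) π := by
  have hle := wexc_le (m+1) π
  -- anti-excedance count
  have hanti : (univ.filter (fun u : Fin (m+1) => (π u:ℕ) < (u:ℕ))).card
      = (m+1) - wexc (m+1) π := by
    have h := Finset.card_filter_add_card_filter_not
      (s := (univ : Finset (Fin (m+1)))) (p := fun u => (u:ℕ) ≤ (π u:ℕ))
    have he : (univ.filter (fun u : Fin (m+1) => ¬ ((u:ℕ) ≤ (π u:ℕ))))
        = univ.filter (fun u : Fin (m+1) => (π u:ℕ) < (u:ℕ)) := by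
      apply Finset.filter_congr; intro u _; simp [not_le]
    rw [he] at h
    have : wexc (m+1) π + (univ.filter (fun u : Fin (m+1) => (π u:ℕ) < (u:ℕ))).card = m+1 := by
      simpa [wexc] using h
    omega
  have hone : (univ.filter (fun u : Fin (m+1) => (π u:ℕ) = m)).card = 1 := by
    rw [Finset.card_eq_one]
    refine ⟨π.symm (Fin.last m), ?_⟩
    ext u
    simp only [Finset.mem_filter, Finset.mem_univ, true_and, Finset.mem_singleton]
    constructor
    · intro h
      have : π u = Fin.last m := by
        apply Fin.val_injective; simpa [Fin.val_last] using h
      simp [← this]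
    · rintro rfl; simp [Fin.val_last]
  -- reindex by rev
  have hre : wexc (m+1) (FF m π)
      = (univ.filter (fun u : Fin (m+1) =>
          ((finRotate (m+1) (π u) : Fin (m+1)) : ℕ) ≤ (u:ℕ))).card := by
    unfold wexc
    apply Finset.card_bij' (fun (i : Fin (m+1)) _ => Fin.rev i) (fun (u : Fin (m+1)) _ => Fin.rev u)
    · intro i hi
      rw [Finset.mem_filter] at hi
      simp only [Finset.mem_filter, Finset.mem_univ, true_and, FF_apply, Fin.rev_rev,
        Fin.val_rev] at hi ⊢
      have := (finRotate (m+1) (π (Fin.rev i))).is_lt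
      have := i.is_lt
      omega
    · intro u hu
      rw [Finset.mem_filter] at hu ⊢
      simp only [Finset.mem_filter, Finset.mem_univ, true_and, FF_apply, Fin.rev_rev,
        Fin.val_rev] at hu ⊢
      have := (finRotate (m+1) (π u)).is_lt
      have := u.is_lt
      omega
    · intro i _; exact Fin.rev_rev i
    · intro u _; exact Fin.rev_rev u
  -- split the filtered set
  have hsplit : (univ.filter (fun u : Fin (m+1) =>
        ((finRotate (m+1) (π u) : Fin (m+1)) : ℕ) ≤ (u:ℕ)))
      = (univ.filter (fun u : Fin (m+1) => (π u:ℕ) = m))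
        ∪ (univ.filter (fun u : Fin (m+1) => (π u:ℕ) < (u:ℕ))) := by
    ext u
    simp only [Finset.mem_filter, Finset.mem_univ, true_and, Finset.mem_union, rot_val]
    have := (π u).is_lt
    have := u.is_lt
    split_ifs with h <;> omega
  have hdisj : Disjoint (univ.filter (fun u : Fin (m+1) => (π u:ℕ) = m))
      (univ.filter (fun u : Fin (m+1) => (π u:ℕ) < (u:ℕ))) := by
    rw [Finset.disjoint_left]
    intro u h1 h2
    simp only [Finset.mem_filter] at h1 h2
    have := u.is_lt
    omega
  rw [hre, hsplit, Finset.card_union_of_disjoint hdisj, hone, hanti]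
  omega

lemma FF_top (m : ℕ) (π : Equiv.Perm (Fin (m+1))) (i : Fin (m+1)) :
    ((FF m π i : Fin (m+1)) : ℕ) = m ↔ ((π (Fin.rev i) : Fin (m+1)) : ℕ) = m := by
  rw [FF_apply, Fin.val_rev, rot_val]
  have := (π (Fin.rev i)).is_lt
  split_ifs with h <;> omega

theorem stmt10 (n k j : ℕ) (hn : 1 ≤ n) (hk1 : 1 ≤ k) (hkn : k ≤ n) (hj1 : 1 ≤ j) (hjn : j ≤ n) :
    (Finset.univ.filter (fun π : Equiv.Perm (Fin n) =>
        wexc n π = k ∧ ∃ i : Fin n, (π i : ℕ) = n - 1 ∧ (i : ℕ) + 1 = j)).card =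
    (Finset.univ.filter (fun π : Equiv.Perm (Fin n) =>
        wexc n π = n + 1 - k ∧ ∃ i : Fin n, (π i : ℕ) = n - 1 ∧ (i : ℕ) + 1 = n + 1 - j)).card := by
  obtain ⟨m, rfl⟩ : ∃ m, n = m + 1 := ⟨n - 1, by omega⟩
  apply Finset.card_bij' (fun (π : Equiv.Perm (Fin (m+1))) _ => FF m π)
    (fun (π : Equiv.Perm (Fin (m+1))) _ => FF m π)
  · intro a ha
    simp only [Finset.mem_filter, Finset.mem_univ, true_and] at ha ⊢
    obtain ⟨hw, i, hv, hp⟩ := ha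
    have hwle := wexc_le (m+1) a
    refine ⟨by rw [wexc_FF, hw], Fin.rev i, ?_, ?_⟩
    · simp only [Nat.add_sub_cancel] at hv ⊢
      rw [FF_top, Fin.rev_rev]
      simpa using hv
    · rw [Fin.val_rev]
      have := i.is_lt
      omega
  · intro a ha
    simp only [Finset.mem_filter, Finset.mem_univ, true_and] at ha ⊢
    obtain ⟨hw, i, hv, hp⟩ := ha
    have hwle := wexc_le (m+1) a
    refine ⟨by rw [wexc_FF, hw]; omega, Fin.rev i, ?_, ?_⟩
    · simp only [Nat.add_sub_cancel] at hv ⊢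
      rw [FF_top, Fin.rev_rev]
      simpa using hv
    · rw [Fin.val_rev]
      have := i.is_lt
      omega
  · intro a _; exact FF_invol m a
  · intro a _; exact FF_invol m a
end

section
/- For n ≥ 2 and 1 ≤ k ≤ n, c_{n,k}(n-1) = 2·|BW_{n,k}|, where c_{n,k}(n-1) = ∑_{i=0}^{k} (-1)^i (k+1-i) (k-i)^{n-1} C(n+1,i) and BW_{n,k} is the set of permutations π = p_1…p_n of [n] with exactly k weak excedances satisfying p_1 > p_n. -/
open Finset

/-- Permutations of [m] with exactly k weak excedances and p_1 < p_m. -/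
def AW (m k : ℕ) : ℕ :=
  (Finset.univ.filter (fun π : Equiv.Perm (Fin m) =>
    wexc m π = k ∧ ∀ i j : Fin m, (i : ℕ) = 0 → (j : ℕ) = m - 1 → π i < π j)).card

/-- Permutations of [m] with exactly k weak excedances and p_1 > p_m. -/
def BW (m k : ℕ) : ℕ :=
  (Finset.univ.filter (fun π : Equiv.Perm (Fin m) =>
    wexc m π = k ∧ ∀ i j : Fin m, (i : ℕ) = 0 → (j : ℕ) = m - 1 → π j < π i)).card

section Aux
open Finset Equiv Equiv.Perm


/-- insertion of the last point into a permutation -/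
def ins (m : ℕ) : Option (Fin m) × Perm (Fin m) ≃ Perm (Fin (m+1)) :=
  Equiv.Perm.decomposeOption.symm.trans (Equiv.permCongr finSuccEquivLast).symm

lemma ins_apply (m : ℕ) (x : Option (Fin m)) (σ : Perm (Fin m)) (a : Fin (m+1)) :
    ins m (x, σ) a = finSuccEquivLast.symm ((Equiv.swap none x) ((finSuccEquivLast a).map σ)) := by
  simp [ins, Equiv.permCongr_apply, Equiv.Perm.decomposeOption_symm_apply, Equiv.Perm.mul_apply]

lemma i_none_last (m : ℕ) (σ : Perm (Fin m)) : ins m (none, σ) (Fin.last m) = Fin.last m := by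
  simp [ins_apply]

lemma i_none_cast (m : ℕ) (σ : Perm (Fin m)) (a : Fin m) :
    ins m (none, σ) (Fin.castSucc a) = Fin.castSucc (σ a) := by
  simp [ins_apply]

lemma i_some_last (m : ℕ) (σ : Perm (Fin m)) (x₀ : Fin m) :
    ins m (some x₀, σ) (Fin.last m) = Fin.castSucc x₀ := by
  simp [ins_apply]

lemma i_some_cast_eq (m : ℕ) (σ : Perm (Fin m)) (x₀ a : Fin m) (h : σ a = x₀) :
    ins m (some x₀, σ) (Fin.castSucc a) = Fin.last m := by
  simp [ins_apply, h]

lemma i_some_cast_ne (m : ℕ) (σ : Perm (Fin m)) (x₀ a : Fin m) (h : σ a ≠ x₀) :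
    ins m (some x₀, σ) (Fin.castSucc a) = Fin.castSucc (σ a) := by
  rw [ins_apply]
  rw [Equiv.swap_apply_of_ne_of_ne (by simp) (by simp [h])]
  simp

lemma wexc_eq_sum (n : ℕ) (π : Perm (Fin n)) :
    wexc n π = ∑ i : Fin n, if (i : ℕ) ≤ (π i : ℕ) then 1 else 0 := by
  rw [wexc, Finset.card_filter]

lemma W1 (m : ℕ) (σ : Perm (Fin m)) : wexc (m+1) (ins m (none, σ)) = wexc m σ + 1 := by
  rw [wexc_eq_sum, wexc_eq_sum, Fin.sum_univ_castSucc]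
  simp [i_none_cast, i_none_last]

lemma W2 (m : ℕ) (σ : Perm (Fin m)) (j₀ : Fin m) :
    wexc (m+1) (ins m (some (σ j₀), σ)) + (if (j₀ : ℕ) ≤ ((σ j₀ : Fin m) : ℕ) then 1 else 0)
      = wexc m σ + 1 := by
  rw [wexc_eq_sum, wexc_eq_sum, Fin.sum_univ_castSucc]
  have hlast : (if ((Fin.last m : Fin (m+1)) : ℕ) ≤ ((ins m (some (σ j₀), σ)) (Fin.last m) : ℕ) then 1 else 0) = 0 := by
    rw [i_some_last]
    simp [Fin.last]
  rw [hlast]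
  have h0 : ∑ a : Fin m, (if ((Fin.castSucc a : Fin (m+1)) : ℕ) ≤ ((ins m (some (σ j₀), σ)) (Fin.castSucc a) : ℕ) then 1 else 0)
      = 1 + ∑ a ∈ Finset.univ.erase j₀, (if (a : ℕ) ≤ ((σ a : Fin m) : ℕ) then 1 else 0) := by
    rw [← Finset.add_sum_erase _ _ (Finset.mem_univ j₀)]
    congr 1
    · rw [i_some_cast_eq m σ _ j₀ rfl]
      simp [Fin.last]
    · refine Finset.sum_congr rfl fun a ha => ?_
      have hne : σ a ≠ σ j₀ := fun h => (Finset.mem_erase.1 ha).1 (σ.injective h)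
      rw [i_some_cast_ne m σ _ a hne]
      simp
  rw [h0]
  have h1 : ∑ a : Fin m, (if (a : ℕ) ≤ ((σ a : Fin m) : ℕ) then 1 else 0)
      = (if (j₀ : ℕ) ≤ ((σ j₀ : Fin m) : ℕ) then 1 else 0)
        + ∑ a ∈ Finset.univ.erase j₀, (if (a : ℕ) ≤ ((σ a : Fin m) : ℕ) then 1 else 0) := by
    rw [← Finset.add_sum_erase _ _ (Finset.mem_univ j₀)]
  rw [h1]
  ring

lemma wexc_le_s12 (m : ℕ) (σ : Perm (Fin m)) : wexc m σ ≤ m := by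
  rw [wexc]
  calc (Finset.univ.filter _).card ≤ (Finset.univ : Finset (Fin m)).card := Finset.card_filter_le _ _
  _ = m := by simp

lemma wexc_pos (m : ℕ) (σ : Perm (Fin (m+1))) : 1 ≤ wexc (m+1) σ := by
  rw [wexc]
  refine Finset.card_pos.2 ⟨0, Finset.mem_filter.2 ⟨Finset.mem_univ _, ?_⟩⟩
  simp

lemma eulerian_zero_of_gt (m k : ℕ) (h : m < k) : eulerian m k = 0 := by
  rw [eulerian, Finset.card_eq_zero, Finset.filter_eq_empty_iff]
  intro σ _
  have := wexc_le_s12 m σ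
  omega

lemma eulerian_succ_zero (m : ℕ) : eulerian (m+1) 0 = 0 := by
  rw [eulerian, Finset.card_eq_zero, Finset.filter_eq_empty_iff]
  intro σ _
  have := wexc_pos m σ
  omega

lemma count_nonexc (m : ℕ) (σ : Perm (Fin m)) :
    (Finset.univ.filter (fun j : Fin m => ¬ (j:ℕ) ≤ ((σ j : Fin m):ℕ))).card + wexc m σ = m := by
  rw [wexc, add_comm]
  rw [Finset.card_filter_add_card_filter_not]
  simp

lemma erecN (m k : ℕ) (hk1 : 1 ≤ k) (hk2 : k ≤ m + 1) :
    eulerian (m+1) k = k * eulerian m k + (m + 2 - k) * eulerian m (k-1) := by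
  have step1 : eulerian (m+1) k
      = ∑ σ : Perm (Fin m), ∑ x : Option (Fin m),
          (if wexc (m+1) (ins m (x, σ)) = k then 1 else 0) := by
    rw [eulerian, Finset.card_filter, ← Equiv.sum_comp (ins m)
      (fun π => if wexc (m+1) π = k then 1 else 0), Fintype.sum_prod_type_right]
  rw [step1]
  have step2 : ∀ σ : Perm (Fin m),
      (∑ x : Option (Fin m), (if wexc (m+1) (ins m (x, σ)) = k then 1 else 0))
        = k * (if wexc m σ = k then 1 else 0) + (m + 2 - k) * (if wexc m σ + 1 = k then 1 else 0) := by
    intro σ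
    rw [Fintype.sum_option]
    rw [W1]
    have hx : ∑ x₀ : Fin m, (if wexc (m+1) (ins m (some x₀, σ)) = k then 1 else 0)
        = ∑ j₀ : Fin m, (if wexc (m+1) (ins m (some (σ j₀), σ)) = k then 1 else 0) :=
      (Equiv.sum_comp σ (fun x₀ => if wexc (m+1) (ins m (some x₀, σ)) = k then 1 else 0)).symm
    rw [hx]
    have hpt : ∀ j₀ : Fin m,
        (if wexc (m+1) (ins m (some (σ j₀), σ)) = k then 1 else 0)
          = (if (j₀:ℕ) ≤ ((σ j₀ : Fin m):ℕ) then (if wexc m σ = k then 1 else 0)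
              else (if wexc m σ + 1 = k then 1 else 0)) := by
      intro j₀
      have h2 := W2 m σ j₀
      by_cases h : (j₀:ℕ) ≤ ((σ j₀ : Fin m):ℕ)
      · rw [if_pos h] at h2 ⊢
        have heq : wexc (m+1) (ins m (some (σ j₀), σ)) = wexc m σ := by omega
        rw [heq]
      · rw [if_neg h] at h2 ⊢
        have heq : wexc (m+1) (ins m (some (σ j₀), σ)) = wexc m σ + 1 := by omega
        rw [heq]
    rw [Finset.sum_congr rfl (fun j₀ _ => hpt j₀)]
    rw [Finset.sum_ite, Finset.sum_const, Finset.sum_const, smul_eq_mul, smul_eq_mul]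
    have hw : (Finset.univ.filter (fun j : Fin m => (j:ℕ) ≤ ((σ j : Fin m):ℕ))).card = wexc m σ := rfl
    have hnw := count_nonexc m σ
    rw [hw]
    by_cases h1 : wexc m σ = k
    · rw [if_pos h1, if_neg (by omega : ¬ wexc m σ + 1 = k)]
      omega
    · by_cases h2 : wexc m σ + 1 = k
      · rw [if_neg h1, if_pos h2]
        omega
      · rw [if_neg h1, if_neg h2]
        omega
  rw [Finset.sum_congr rfl (fun σ _ => step2 σ)]
  rw [Finset.sum_add_distrib, ← Finset.mul_sum, ← Finset.mul_sum]
  congr 1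
  · congr 1
    rw [eulerian, Finset.card_filter]
  · have : ∀ σ : Perm (Fin m), (if wexc m σ + 1 = k then 1 else 0) = (if wexc m σ = k - 1 then 1 else 0) := by
      intro σ
      have : wexc m σ + 1 = k ↔ wexc m σ = k - 1 := by omega
      simp [this]
    rw [Finset.sum_congr rfl (fun σ _ => this σ)]
    congr 1
    rw [eulerian, Finset.card_filter]

/-- Worpitzky-type sum. -/
def Sw (m k : ℕ) : ℤ :=
  ∑ i ∈ Finset.range (k + 1), (-1 : ℤ) ^ i * ((m + 1).choose i) * ((k - i : ℕ) : ℤ) ^ m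

lemma key (M K i : ℕ) :
    ((K : ℤ) - (i + 1)) * ((M + 1).choose (i + 1)) =
      (K : ℤ) * (M.choose (i + 1)) - ((M : ℤ) + 1 - K) * (M.choose i) := by
  rcases le_or_gt (i + 1) (M + 1) with h | h
  · have pasc : ((M + 1).choose (i + 1) : ℤ) = M.choose i + M.choose (i + 1) := by
      rw [Nat.choose_succ_succ]; push_cast; ring
    have hid : (M.choose (i + 1) : ℤ) * (i + 1) = (M.choose i : ℤ) * ((M : ℤ) - i) := by
      have := Nat.choose_succ_right_eq M i
      have h2 : ((M.choose (i+1) * (i+1) : ℕ) : ℤ) = ((M.choose i * (M - i) : ℕ) : ℤ) := by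
        exact_mod_cast congrArg (Nat.cast : ℕ → ℤ) this
      push_cast at h2
      rcases le_or_gt i M with hiM | hiM
      · rwa [Nat.cast_sub hiM] at h2
      · have : M.choose i = 0 := Nat.choose_eq_zero_of_lt hiM
        have h3 : M.choose (i+1) = 0 := Nat.choose_eq_zero_of_lt (by omega)
        simp [this, h3]
    rw [pasc]; linarith [hid]
  · have h1 : (M + 1).choose (i + 1) = 0 := Nat.choose_eq_zero_of_lt (by omega)
    have h2 : M.choose (i + 1) = 0 := Nat.choose_eq_zero_of_lt (by omega)
    have h3 : M.choose i = 0 := Nat.choose_eq_zero_of_lt (by omega)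
    simp [h1, h2, h3]

lemma master (M e K k : ℕ) (hk : 1 ≤ k) :
    ∑ i ∈ Finset.range (k + 1),
        (-1 : ℤ) ^ i * ((K : ℤ) - i) * ((M + 1).choose i) * ((k - i : ℕ) : ℤ) ^ e =
      (K : ℤ) * (∑ i ∈ Finset.range (k + 1),
          (-1 : ℤ) ^ i * (M.choose i) * ((k - i : ℕ) : ℤ) ^ e) +
      ((M : ℤ) + 1 - K) * (∑ i ∈ Finset.range k,
          (-1 : ℤ) ^ i * (M.choose i) * ((k - 1 - i : ℕ) : ℤ) ^ e) := by
  rw [Finset.sum_range_succ' (fun i => (-1 : ℤ) ^ i * ((K : ℤ) - i) * ((M + 1).choose i) * ((k - i : ℕ) : ℤ) ^ e)]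
  rw [Finset.sum_range_succ' (fun i => (-1 : ℤ) ^ i * (M.choose i) * ((k - i : ℕ) : ℤ) ^ e)]
  rw [mul_add, Finset.mul_sum, Finset.mul_sum, add_assoc]
  have : ∀ i ∈ Finset.range k,
      (-1 : ℤ) ^ (i+1) * ((K : ℤ) - ((i+1 : ℕ) : ℤ)) * (((M + 1).choose (i+1) : ℕ) : ℤ) * ((k - (i+1) : ℕ) : ℤ) ^ e =
      (K : ℤ) * ((-1 : ℤ) ^ (i+1) * ((M.choose (i+1) : ℕ) : ℤ) * ((k - (i+1) : ℕ) : ℤ) ^ e) +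
      ((M : ℤ) + 1 - K) * ((-1 : ℤ) ^ i * ((M.choose i : ℕ) : ℤ) * ((k - 1 - i : ℕ) : ℤ) ^ e) := by
    intro i _
    have hsub : (k - 1 - i : ℕ) = (k - (i+1) : ℕ) := by omega
    rw [hsub]
    push_cast
    linear_combination ((-1 : ℤ) ^ (i+1) * ((k - (i+1) : ℕ) : ℤ) ^ e) * key M K i
  rw [Finset.sum_congr rfl this, Finset.sum_add_distrib]
  simp only [Nat.choose_zero_right, Nat.cast_one, one_mul, pow_zero]
  ring

lemma alg1 (m k : ℕ) (hk : 1 ≤ k) :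
    Sw (m + 1) k = (k : ℤ) * Sw m k + ((m : ℤ) + 2 - k) * Sw m (k - 1) := by
  have h1 : Sw (m + 1) k =
      ∑ i ∈ Finset.range (k + 1),
        (-1 : ℤ) ^ i * ((k : ℤ) - i) * ((m + 1 + 1).choose i) * ((k - i : ℕ) : ℤ) ^ m := by
    unfold Sw
    refine Finset.sum_congr rfl fun i hi => ?_
    rw [Finset.mem_range] at hi
    have : ((k - i : ℕ) : ℤ) = (k : ℤ) - i := by
      rw [Nat.cast_sub (by omega)]
    rw [pow_succ]
    rw [this]
    ring
  rw [h1, master (m + 1) m k k hk]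
  have h2 : Sw m (k - 1) =
      ∑ i ∈ Finset.range k, (-1 : ℤ) ^ i * ((m + 1).choose i) * ((k - 1 - i : ℕ) : ℤ) ^ m := by
    unfold Sw
    rw [show k - 1 + 1 = k from by omega]
  rw [h2]
  unfold Sw
  push_cast
  ring

lemma alg2 (n k : ℕ) (hn : 2 ≤ n) (hk1 : 1 ≤ k) (hkn : k ≤ n) :
    (∑ i ∈ Finset.range (k + 1),
      (-1 : ℤ) ^ i * ((k + 1 - i : ℕ) : ℤ) ^ (n - (n-1)) * ((k - i : ℕ) : ℤ) ^ (n-1) * ((n + 1).choose i))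
      = ((k : ℤ) + 1) * Sw (n - 1) k + ((n : ℤ) - k) * Sw (n - 1) (k - 1) := by
  have hnn : n - (n - 1) = 1 := by omega
  have h1 : ∀ i ∈ Finset.range (k + 1),
      (-1 : ℤ) ^ i * ((k + 1 - i : ℕ) : ℤ) ^ (n - (n-1)) * ((k - i : ℕ) : ℤ) ^ (n-1) * ((n + 1).choose i)
      = (-1 : ℤ) ^ i * (((k+1 : ℕ) : ℤ) - i) * (((n-1) + 1 + 1).choose i) * ((k - i : ℕ) : ℤ) ^ (n-1) := by
    intro i hi
    rw [Finset.mem_range] at hi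
    have e1 : ((k + 1 - i : ℕ) : ℤ) = ((k+1 : ℕ) : ℤ) - i := by
      rw [Nat.cast_sub (by omega)]
    have e2 : (n - 1) + 1 + 1 = n + 1 := by omega
    rw [hnn, e1, e2, pow_one]
    ring
  rw [Finset.sum_congr rfl h1, master (n-1+1) (n-1) (k+1) k hk1]
  have h2 : Sw (n-1) (k - 1) =
      ∑ i ∈ Finset.range k, (-1 : ℤ) ^ i * ((n-1+1).choose i) * ((k - 1 - i : ℕ) : ℤ) ^ (n-1) := by
    unfold Sw
    rw [show k - 1 + 1 = k from by omega]
  rw [h2]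
  unfold Sw
  have e3 : ((n - 1 + 1 : ℕ) : ℤ) + 1 - ((k+1 : ℕ) : ℤ) = (n : ℤ) - k := by
    have : (n - 1 + 1 : ℕ) = n := by omega
    rw [this]; push_cast; ring
  rw [e3]
  push_cast
  ring

lemma Sw_zero_of_big : ∀ m k, m + 1 ≤ k → Sw m k = 0 := by
  intro m
  induction m with
  | zero =>
    intro k hk
    unfold Sw
    have h : ∀ i ∈ Finset.range (k+1), (-1 : ℤ) ^ i * ((0+1).choose i) * ((k - i : ℕ) : ℤ) ^ 0
        = (-1 : ℤ) ^ i * ((1).choose i) := by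
      intro i _; simp
    rw [Finset.sum_congr rfl h]
    rw [← Finset.sum_subset (Finset.range_subset_range.2 (by omega : 2 ≤ k + 1))]
    · decide
    · intro i _ hi
      rw [Finset.mem_range, not_lt] at hi
      have : (1).choose i = 0 := Nat.choose_eq_zero_of_lt (by omega)
      simp [this]
  | succ m ih =>
    intro k hk
    rw [alg1 m k (by omega), ih k (by omega), ih (k-1) (by omega)]
    ring

lemma erec (m k : ℕ) (hk1 : 1 ≤ k) :
    (eulerian (m+1) k : ℤ) = (k : ℤ) * eulerian m k + ((m:ℤ) + 2 - k) * eulerian m (k-1) := by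
  rcases le_or_gt k (m+1) with h | h
  · rw [erecN m k hk1 h]
    push_cast [Nat.cast_sub (by omega : k ≤ m + 2)]
    ring
  · rw [eulerian_zero_of_gt (m+1) k h, eulerian_zero_of_gt m k (by omega)]
    rcases eq_or_lt_of_le (Nat.succ_le_of_lt h) with h2 | h2
    · have hk : k = m + 2 := by omega
      subst hk
      push_cast
      ring
    · rw [eulerian_zero_of_gt m (k-1) (by omega)]
      ring

lemma worp : ∀ m k : ℕ, (eulerian m k : ℤ) = Sw m k := by
  intro m
  induction m with
  | zero =>
    intro k
    match k with
    | 0 =>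
      have h1 : eulerian 0 0 = 1 := by decide
      rw [h1, Sw]
      simp
    | (k+1) =>
      rw [eulerian_zero_of_gt 0 (k+1) (by omega), Sw_zero_of_big 0 (k+1) (by omega)]
      simp
  | succ m ih =>
    intro k
    match k with
    | 0 =>
      rw [eulerian_succ_zero m, Sw]
      simp
    | (k+1) =>
      rw [erec m (k+1) (by omega), alg1 m (k+1) (by omega), ih (k+1), ih (k+1-1)]

lemma bw_iff (m : ℕ) (π : Perm (Fin (m+2))) :
    (∀ i j : Fin (m+2), (i : ℕ) = 0 → (j : ℕ) = (m+2) - 1 → π j < π i)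
      ↔ π (Fin.last (m+1)) < π 0 := by
  constructor
  · intro h
    exact h 0 (Fin.last (m+1)) rfl (by simp [Fin.last])
  · intro h i j hi hj
    have h1 : i = 0 := Fin.ext (by simpa using hi)
    have h2 : j = Fin.last (m+1) := Fin.ext (by simp [Fin.last]; omega)
    rw [h1, h2]
    exact h

lemma cond_none (m : ℕ) (σ : Perm (Fin (m+1))) :
    ¬ (ins (m+1) (none, σ) (Fin.last (m+1)) < ins (m+1) (none, σ) 0) := by
  rw [i_none_last]
  exact not_lt.2 (Fin.le_last _)

lemma cond_some (m : ℕ) (σ : Perm (Fin (m+1))) (x₀ : Fin (m+1)) :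
    (ins (m+1) (some x₀, σ) (Fin.last (m+1)) < ins (m+1) (some x₀, σ) 0)
      ↔ (x₀ : ℕ) ≤ ((σ 0 : Fin (m+1)) : ℕ) := by
  have h0 : (0 : Fin (m+2)) = Fin.castSucc (0 : Fin (m+1)) := by simp
  rw [i_some_last, h0]
  by_cases h : σ 0 = x₀
  · rw [i_some_cast_eq _ _ _ _ h]
    simp [Fin.castSucc_lt_last, h.symm ▸ (le_refl (x₀ : ℕ)), h]
  · rw [i_some_cast_ne _ _ _ _ h]
    rw [Fin.castSucc_lt_castSucc_iff, Fin.lt_iff_val_lt_val]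
    have hne : ((σ 0 : Fin (m+1)) : ℕ) ≠ (x₀ : ℕ) := fun hh => h (Fin.ext hh)
    omega

lemma sum_split (m : ℕ) (j : Fin (m+1)) (hj : j ≠ 0) (f : Fin (m+1) → ℕ) :
    ∑ i, f i = f 0 + (f j + ∑ i ∈ (Finset.univ.erase (0 : Fin (m+1))).erase j, f i) := by
  rw [← Finset.add_sum_erase _ f (Finset.mem_univ (0 : Fin (m+1)))]
  rw [← Finset.add_sum_erase _ f (Finset.mem_erase.2 ⟨hj, Finset.mem_univ j⟩)]

lemma swap0 (m : ℕ) (σ : Perm (Fin (m+1))) (j : Fin (m+1)) :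
    (σ * Equiv.swap 0 j) 0 = σ j := by
  simp [Equiv.Perm.mul_apply]

lemma swapj (m : ℕ) (σ : Perm (Fin (m+1))) (j : Fin (m+1)) :
    (σ * Equiv.swap 0 j) j = σ 0 := by
  simp [Equiv.Perm.mul_apply]

lemma swapo (m : ℕ) (σ : Perm (Fin (m+1))) (j i : Fin (m+1)) (h0 : i ≠ 0) (hji : i ≠ j) :
    (σ * Equiv.swap 0 j) i = σ i := by
  rw [Equiv.Perm.mul_apply, Equiv.swap_apply_of_ne_of_ne h0 hji]

lemma wexcswap (m : ℕ) (σ : Perm (Fin (m+1))) (j : Fin (m+1)) (hj : j ≠ 0) :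
    wexc (m+1) (σ * Equiv.swap 0 j) + (if (j:ℕ) ≤ ((σ j : Fin (m+1)):ℕ) then 1 else 0)
      = wexc (m+1) σ + (if (j:ℕ) ≤ ((σ 0 : Fin (m+1)):ℕ) then 1 else 0) := by
  rw [wexc_eq_sum, wexc_eq_sum,
    sum_split m j hj (fun i => if (i:ℕ) ≤ (((σ * Equiv.swap 0 j) i : Fin (m+1)):ℕ) then 1 else 0),
    sum_split m j hj (fun i => if (i:ℕ) ≤ ((σ i : Fin (m+1)):ℕ) then 1 else 0)]
  simp only [swap0, swapj]
  have htail : ∑ i ∈ (Finset.univ.erase (0 : Fin (m+1))).erase j,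
      (if (i:ℕ) ≤ (((σ * Equiv.swap 0 j) i : Fin (m+1)):ℕ) then 1 else 0)
      = ∑ i ∈ (Finset.univ.erase (0 : Fin (m+1))).erase j,
      (if (i:ℕ) ≤ ((σ i : Fin (m+1)):ℕ) then 1 else 0) := by
    refine Finset.sum_congr rfl fun i hi => ?_
    have h1 := (Finset.mem_erase.1 hi).1
    have h2 := (Finset.mem_erase.1 (Finset.mem_erase.1 hi).2).1
    rw [swapo m σ j i h2 h1]
  rw [htail]
  have z1 : (if ((0 : Fin (m+1)):ℕ) ≤ ((σ j : Fin (m+1)):ℕ) then 1 else 0) = 1 := if_pos (by simp)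
  have z2 : (if ((0 : Fin (m+1)):ℕ) ≤ ((σ 0 : Fin (m+1)):ℕ) then 1 else 0) = 1 := if_pos (by simp)
  rw [z1, z2]
  omega

lemma phi_disj (m k : ℕ) (σ : Perm (Fin (m+1))) (j : Fin (m+1)) (hj : j ≠ 0)
    (hw : ((j:ℕ) ≤ ((σ j : Fin (m+1)):ℕ) ∧ wexc (m+1) σ = k)
        ∨ (¬(j:ℕ) ≤ ((σ j : Fin (m+1)):ℕ) ∧ wexc (m+1) σ + 1 = k)) :
    ((j:ℕ) ≤ (((σ * Equiv.swap 0 j) j : Fin (m+1)):ℕ) ∧ wexc (m+1) (σ * Equiv.swap 0 j) = k)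
      ∨ (¬(j:ℕ) ≤ (((σ * Equiv.swap 0 j) j : Fin (m+1)):ℕ)
          ∧ wexc (m+1) (σ * Equiv.swap 0 j) + 1 = k) := by
  have hs := wexcswap m σ j hj
  rw [swapj]
  by_cases hb : (j:ℕ) ≤ ((σ 0 : Fin (m+1)):ℕ)
  · rw [if_pos hb] at hs
    rcases hw with ⟨h1, h2⟩ | ⟨h1, h2⟩
    · rw [if_pos h1] at hs; exact Or.inl ⟨hb, by omega⟩
    · rw [if_neg h1] at hs; exact Or.inl ⟨hb, by omega⟩
  · rw [if_neg hb] at hs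
    rcases hw with ⟨h1, h2⟩ | ⟨h1, h2⟩
    · rw [if_pos h1] at hs; exact Or.inr ⟨hb, by omega⟩
    · rw [if_neg h1] at hs; exact Or.inr ⟨hb, by omega⟩

lemma sum_ne_zero_helper (m : ℕ) (Q : Fin (m+1) → Prop) [DecidablePred Q] :
    ∑ j : Fin (m+1), (if j ≠ 0 ∧ Q j then 1 else 0)
      = ∑ j ∈ Finset.univ.erase (0 : Fin (m+1)), (if Q j then 1 else 0) := by
  rw [← Finset.filter_ne' Finset.univ (0 : Fin (m+1)), Finset.sum_filter]
  refine Finset.sum_congr rfl fun j _ => ?_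
  by_cases h1 : j ≠ 0 <;> by_cases h2 : Q j <;> simp [h1, h2]

lemma cnt_w (m : ℕ) (σ : Perm (Fin (m+1))) :
    ∑ j ∈ Finset.univ.erase (0 : Fin (m+1)), (if (j:ℕ) ≤ ((σ j : Fin (m+1)):ℕ) then 1 else 0) + 1
      = wexc (m+1) σ := by
  rw [wexc_eq_sum, ← Finset.add_sum_erase _ _ (Finset.mem_univ (0 : Fin (m+1))),
    if_pos (by simp : (((0 : Fin (m+1)):ℕ)) ≤ ((σ 0 : Fin (m+1)):ℕ))]
  omega

lemma cnt_n (m : ℕ) (σ : Perm (Fin (m+1))) :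
    ∑ j ∈ Finset.univ.erase (0 : Fin (m+1)), (if ¬(j:ℕ) ≤ ((σ j : Fin (m+1)):ℕ) then 1 else 0)
      + wexc (m+1) σ = m + 1 := by
  have h := count_nonexc (m+1) σ
  rw [Finset.card_filter, ← Finset.add_sum_erase _ _ (Finset.mem_univ (0 : Fin (m+1))),
    if_neg (by simp : ¬ ¬ (((0 : Fin (m+1)):ℕ)) ≤ ((σ 0 : Fin (m+1)):ℕ)), zero_add] at h
  exact h

lemma eul_sum (M k : ℕ) :
    ∑ σ : Perm (Fin M), (if wexc M σ = k then 1 else 0) = eulerian M k := by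
  rw [eulerian, Finset.card_filter]

def Dp (m k : ℕ) (σ : Perm (Fin (m+1))) (j : Fin (m+1)) : Prop :=
  ((j:ℕ) ≤ ((σ j : Fin (m+1)):ℕ) ∧ wexc (m+1) σ = k)
    ∨ (¬(j:ℕ) ≤ ((σ j : Fin (m+1)):ℕ) ∧ wexc (m+1) σ + 1 = k)

instance (m k : ℕ) (σ : Perm (Fin (m+1))) (j : Fin (m+1)) : Decidable (Dp m k σ j) := by
  unfold Dp; infer_instance

def Aset (m k : ℕ) : Finset (Perm (Fin (m+1)) × Fin (m+1)) :=
  Finset.univ.filter (fun p => p.2 ≠ 0 ∧ Dp m k p.1 p.2 ∧ ((p.1 p.2 : Fin (m+1)):ℕ) < ((p.1 0 : Fin (m+1)):ℕ))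

def Bset (m k : ℕ) : Finset (Perm (Fin (m+1)) × Fin (m+1)) :=
  Finset.univ.filter (fun p => p.2 ≠ 0 ∧ Dp m k p.1 p.2 ∧ ((p.1 0 : Fin (m+1)):ℕ) < ((p.1 p.2 : Fin (m+1)):ℕ))

def Uset (m k : ℕ) : Finset (Perm (Fin (m+1)) × Fin (m+1)) :=
  Finset.univ.filter (fun p => p.2 ≠ 0 ∧ Dp m k p.1 p.2)

lemma hAB (m k : ℕ) : (Aset m k).card = (Bset m k).card := by
  refine Finset.card_bij' (fun p _ => (p.1 * Equiv.swap 0 p.2, p.2))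
    (fun p _ => (p.1 * Equiv.swap 0 p.2, p.2)) ?_ ?_ ?_ ?_
  · rintro ⟨σ, j⟩ hp
    obtain ⟨-, hj, hD, hlt⟩ := Finset.mem_filter.1 hp
    refine Finset.mem_filter.2 ⟨Finset.mem_univ _, hj, phi_disj m k σ j hj hD, ?_⟩
    show ((σ * Equiv.swap 0 j) 0 : ℕ) < (((σ * Equiv.swap 0 j) j : Fin (m+1)):ℕ)
    rw [swap0, swapj]
    exact hlt
  · rintro ⟨σ, j⟩ hp
    obtain ⟨-, hj, hD, hlt⟩ := Finset.mem_filter.1 hp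
    refine Finset.mem_filter.2 ⟨Finset.mem_univ _, hj, phi_disj m k σ j hj hD, ?_⟩
    show (((σ * Equiv.swap 0 j) j : Fin (m+1)):ℕ) < (((σ * Equiv.swap 0 j) 0 : Fin (m+1)):ℕ)
    rw [swap0, swapj]
    exact hlt
  · rintro ⟨σ, j⟩ _
    simp only [Prod.mk.injEq]
    constructor
    · rw [mul_assoc, Equiv.swap_mul_self, mul_one]
    · trivial
  · rintro ⟨σ, j⟩ _
    simp only [Prod.mk.injEq]
    constructor
    · rw [mul_assoc, Equiv.swap_mul_self, mul_one]
    · trivial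

lemma hABU (m k : ℕ) : (Aset m k).card + (Bset m k).card = (Uset m k).card := by
  have hA : Aset m k = (Uset m k).filter
      (fun p => ((p.1 p.2 : Fin (m+1)):ℕ) < ((p.1 0 : Fin (m+1)):ℕ)) := by
    ext p
    simp only [Aset, Uset, Finset.mem_filter, Finset.mem_univ, true_and]
    tauto
  have hB : Bset m k = (Uset m k).filter
      (fun p => ¬ ((p.1 p.2 : Fin (m+1)):ℕ) < ((p.1 0 : Fin (m+1)):ℕ)) := by
    ext p
    simp only [Bset, Uset, Finset.mem_filter, Finset.mem_univ, true_and]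
    constructor
    · rintro ⟨hj, hD, hlt⟩
      exact ⟨⟨hj, hD⟩, by omega⟩
    · rintro ⟨⟨hj, hD⟩, hge⟩
      refine ⟨hj, hD, ?_⟩
      have hne : ((p.1 p.2 : Fin (m+1)):ℕ) ≠ ((p.1 0 : Fin (m+1)):ℕ) := by
        intro hh
        exact hj (p.1.injective (Fin.ext hh))
      omega
  rw [hA, hB]
  exact Finset.card_filter_add_card_filter_not _

lemma hU (m k : ℕ) (hk1 : 1 ≤ k) (hk2 : k ≤ m + 2) :
    (Uset m k).card = (k-1) * eulerian (m+1) k + (m+2-k) * eulerian (m+1) (k-1) := by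
  rw [Uset, Finset.card_filter, Fintype.sum_prod_type]
  have h1 : ∀ σ : Perm (Fin (m+1)),
      (∑ j : Fin (m+1), (if j ≠ 0 ∧ Dp m k σ j then 1 else 0))
        = (if wexc (m+1) σ = k then 1 else 0) * (k-1)
          + (if wexc (m+1) σ = k - 1 then 1 else 0) * (m+2-k) := by
    intro σ
    rw [sum_ne_zero_helper m (fun j => Dp m k σ j)]
    by_cases h1 : wexc (m+1) σ = k
    · have h2 : ¬ (wexc (m+1) σ + 1 = k) := by omega
      have h3 : ¬ (wexc (m+1) σ = k - 1) := by omega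
      have hpt : ∀ j ∈ Finset.univ.erase (0 : Fin (m+1)),
          (if Dp m k σ j then 1 else 0) = (if (j:ℕ) ≤ ((σ j : Fin (m+1)):ℕ) then 1 else 0) := by
        intro j _
        refine if_congr ?_ rfl rfl
        constructor
        · rintro (⟨h, -⟩ | ⟨-, hh⟩)
          · exact h
          · exact absurd hh h2
        · intro h
          exact Or.inl ⟨h, h1⟩
      rw [Finset.sum_congr rfl hpt, if_pos h1, if_neg h3]
      have := cnt_w m σ
      omega
    · by_cases h2 : wexc (m+1) σ = k - 1
      · have h2' : wexc (m+1) σ + 1 = k := by omega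
        have hpt : ∀ j ∈ Finset.univ.erase (0 : Fin (m+1)),
            (if Dp m k σ j then 1 else 0) = (if ¬ (j:ℕ) ≤ ((σ j : Fin (m+1)):ℕ) then 1 else 0) := by
          intro j _
          refine if_congr ?_ rfl rfl
          constructor
          · rintro (⟨-, hh⟩ | ⟨h, -⟩)
            · exact absurd hh h1
            · exact h
          · intro h
            exact Or.inr ⟨h, h2'⟩
        rw [Finset.sum_congr rfl hpt, if_neg h1, if_pos h2]
        have := cnt_n m σ
        omega
      · have hpt : ∀ j ∈ Finset.univ.erase (0 : Fin (m+1)),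
            (if Dp m k σ j then 1 else 0) = 0 := by
          intro j _
          refine if_neg ?_
          rintro (⟨-, hh⟩ | ⟨-, hh⟩)
          · exact h1 hh
          · exact h2 (by omega)
        rw [Finset.sum_congr rfl hpt, if_neg h1, if_neg h2]
        simp
  rw [Finset.sum_congr rfl fun σ _ => h1 σ, Finset.sum_add_distrib]
  rw [← Finset.sum_mul, ← Finset.sum_mul, eul_sum, eul_sum]
  ring

lemma hBWA (m k : ℕ) (hk1 : 1 ≤ k) : BW (m+2) k = eulerian (m+1) k + (Aset m k).card := by
  have h0 : BW (m+2) k = ∑ σ : Perm (Fin (m+1)), ∑ x : Option (Fin (m+1)),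
      (if wexc (m+2) (ins (m+1) (x, σ)) = k ∧
        (ins (m+1) (x, σ)) (Fin.last (m+1)) < (ins (m+1) (x, σ)) 0 then 1 else 0) := by
    rw [BW, Finset.card_filter]
    have hb : ∀ π : Perm (Fin (m+2)),
        (if wexc (m+2) π = k ∧ (∀ i j : Fin (m+2), (i:ℕ) = 0 → (j:ℕ) = (m+2) - 1 → π j < π i) then 1 else 0)
          = (if wexc (m+2) π = k ∧ π (Fin.last (m+1)) < π 0 then 1 else 0) :=
      fun π => if_congr (and_congr_right fun _ => bw_iff m π) rfl rfl
    rw [Finset.sum_congr rfl fun π _ => hb π, ← Equiv.sum_comp (ins (m+1))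
      (fun π => if wexc (m+2) π = k ∧ π (Fin.last (m+1)) < π 0 then 1 else 0),
      Fintype.sum_prod_type_right]
  rw [h0]
  have h1 : ∀ σ : Perm (Fin (m+1)),
      (∑ x : Option (Fin (m+1)),
        (if wexc (m+2) (ins (m+1) (x, σ)) = k ∧
          (ins (m+1) (x, σ)) (Fin.last (m+1)) < (ins (m+1) (x, σ)) 0 then 1 else 0))
        = (if wexc (m+1) σ = k then 1 else 0)
          + ∑ j : Fin (m+1), (if j ≠ 0 ∧ Dp m k σ j ∧ ((σ j : Fin (m+1)):ℕ) < ((σ 0 : Fin (m+1)):ℕ) then 1 else 0) := by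
    intro σ
    rw [Fintype.sum_option]
    have hnone : (if wexc (m+2) (ins (m+1) (none, σ)) = k ∧
        (ins (m+1) (none, σ)) (Fin.last (m+1)) < (ins (m+1) (none, σ)) 0 then 1 else 0) = 0 :=
      if_neg (fun h => cond_none m σ h.2)
    rw [hnone, zero_add]
    rw [← Equiv.sum_comp σ (fun x₀ => (if wexc (m+2) (ins (m+1) (some x₀, σ)) = k ∧
      (ins (m+1) (some x₀, σ)) (Fin.last (m+1)) < (ins (m+1) (some x₀, σ)) 0 then 1 else 0))]
    have hpt : ∀ j : Fin (m+1),
        (if wexc (m+2) (ins (m+1) (some (σ j), σ)) = k ∧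
          (ins (m+1) (some (σ j), σ)) (Fin.last (m+1)) < (ins (m+1) (some (σ j), σ)) 0 then 1 else 0)
          = (if Dp m k σ j ∧ ((σ j : Fin (m+1)):ℕ) ≤ ((σ 0 : Fin (m+1)):ℕ) then 1 else 0) := by
      intro j
      refine if_congr (and_congr ?_ (cond_some m σ (σ j))) rfl rfl
      have h2 : wexc (m+2) (ins (m+1) (some (σ j), σ))
          + (if (j:ℕ) ≤ ((σ j : Fin (m+1)):ℕ) then 1 else 0) = wexc (m+1) σ + 1 := W2 (m+1) σ j
      unfold Dp
      constructor
      · intro hw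
        by_cases hle : (j:ℕ) ≤ ((σ j : Fin (m+1)):ℕ)
        · rw [if_pos hle] at h2; exact Or.inl ⟨hle, by omega⟩
        · rw [if_neg hle] at h2; exact Or.inr ⟨hle, by omega⟩
      · rintro (⟨hle, hw⟩ | ⟨hle, hw⟩)
        · rw [if_pos hle] at h2; omega
        · rw [if_neg hle] at h2; omega
    rw [Finset.sum_congr rfl fun j _ => hpt j]
    have hsplit : ∀ j : Fin (m+1),
        (if Dp m k σ j ∧ ((σ j : Fin (m+1)):ℕ) ≤ ((σ 0 : Fin (m+1)):ℕ) then 1 else 0)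
          = (if j = 0 then (if wexc (m+1) σ = k then 1 else 0) else 0)
            + (if j ≠ 0 ∧ Dp m k σ j ∧ ((σ j : Fin (m+1)):ℕ) < ((σ 0 : Fin (m+1)):ℕ) then 1 else 0) := by
      intro j
      by_cases hj : j = 0
      · subst hj
        have hD0 : (Dp m k σ 0 ∧ ((σ 0 : Fin (m+1)):ℕ) ≤ ((σ 0 : Fin (m+1)):ℕ)) ↔ wexc (m+1) σ = k := by
          unfold Dp
          simp
        rw [if_congr hD0 rfl rfl]
        simp
      · rw [if_neg hj, zero_add]
        refine if_congr ?_ rfl rfl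
        have hne : ((σ j : Fin (m+1)):ℕ) ≠ ((σ 0 : Fin (m+1)):ℕ) := fun hh => hj (σ.injective (Fin.ext hh))
        constructor
        · rintro ⟨hD, hle⟩
          exact ⟨hj, hD, by omega⟩
        · rintro ⟨-, hD, hlt⟩
          exact ⟨hD, by omega⟩
    rw [Finset.sum_congr rfl fun j _ => hsplit j, Finset.sum_add_distrib]
    congr 1
    rw [Finset.sum_ite_eq' Finset.univ (0 : Fin (m+1)) (fun _ => (if wexc (m+1) σ = k then 1 else 0))]
    exact if_pos (Finset.mem_univ _)
  rw [Finset.sum_congr rfl fun σ _ => h1 σ, Finset.sum_add_distrib]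
  congr 1
  · exact eul_sum (m+1) k
  · rw [Aset, Finset.card_filter, Fintype.sum_prod_type]

lemma BW_eqN (m k : ℕ) (hk1 : 1 ≤ k) (hk2 : k ≤ m + 2) :
    2 * BW (m+2) k = (k+1) * eulerian (m+1) k + (m+2-k) * eulerian (m+1) (k-1) := by
  rw [hBWA m k hk1]
  have h2 := hAB m k
  have h3 := hABU m k
  have h4 := hU m k hk1 hk2
  have hsum : 2 * (eulerian (m+1) k + (Aset m k).card)
      = 2 * eulerian (m+1) k + ((k-1) * eulerian (m+1) k + (m+2-k) * eulerian (m+1) (k-1)) := by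
    omega
  rw [hsum, show k + 1 = 2 + (k-1) from by omega, add_mul]
  ring

lemma BW_eqZ (m k : ℕ) (hk1 : 1 ≤ k) (hk2 : k ≤ m + 2) :
    2 * (BW (m+2) k : ℤ) = ((k:ℤ)+1) * eulerian (m+1) k + ((m:ℤ)+2-(k:ℤ)) * eulerian (m+1) (k-1) := by
  have h := BW_eqN m k hk1 hk2
  zify [hk2] at h
  linarith [h]

theorem stmt12' (n k : ℕ) (hn : 2 ≤ n) (hk1 : 1 ≤ k) (hkn : k ≤ n) :
    (∑ i ∈ Finset.range (k + 1),
      (-1 : ℤ) ^ i * ((k + 1 - i : ℕ) : ℤ) ^ (n - (n-1)) * ((k - i : ℕ) : ℤ) ^ (n-1) * ((n + 1).choose i))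
      = 2 * (BW n k : ℤ) := by
  obtain ⟨m, rfl⟩ : ∃ m, n = m + 2 := ⟨n - 2, by omega⟩
  have e1 : (m+2) - 1 = m + 1 := rfl
  rw [e1]
  have halg := alg2 (m+2) k hn hk1 hkn
  rw [e1] at halg
  rw [halg, ← worp (m+1) k, ← worp (m+1) (k-1)]
  have hbw := BW_eqZ m k hk1 (by omega)
  push_cast
  linarith [hbw]

end Aux

theorem stmt12 (n k : ℕ) (hn : 2 ≤ n) (hk1 : 1 ≤ k) (hkn : k ≤ n) :
    c n k (n - 1) = 2 * (BW n k : ℤ) :=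
  stmt12' n k hn hk1 hkn
end

section
/- For any integer n ≥ 2 and 1 ≤ k ≤ n, the number of permutations π = p_1…p_n of [n] with exactly k weak excedances and p_1 < p_n equals the number of permutations σ = s_1…s_n of [n] with exactly n+1-k weak excedances and s_1 > s_n. -/
open Finset

namespace Stmt13Aux

variable {m : ℕ}

/-- The map M: M π i = rev (π (rev i)) - 1. -/
def M (π : Equiv.Perm (Fin (m + 2))) : Equiv.Perm (Fin (m + 2)) :=
  Equiv.subRight (1 : Fin (m + 2)) * (Fin.revPerm * π * Fin.revPerm)

/-- The inverse map. -/
def Mi (σ : Equiv.Perm (Fin (m + 2))) : Equiv.Perm (Fin (m + 2)) :=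
  Fin.revPerm * ((Equiv.subRight (1 : Fin (m + 2))).symm * σ * Fin.revPerm)

lemma M_apply (π : Equiv.Perm (Fin (m + 2))) (i : Fin (m + 2)) :
    M π i = Fin.rev (π i.rev) - 1 := by
  simp [M, Equiv.Perm.mul_apply, Equiv.subRight_apply]

lemma Mi_apply (σ : Equiv.Perm (Fin (m + 2))) (i : Fin (m + 2)) :
    Mi σ i = Fin.rev (σ i.rev + 1) := by
  simp [Mi, Equiv.Perm.mul_apply, Equiv.subRight_symm_apply]

lemma M_Mi (σ : Equiv.Perm (Fin (m + 2))) : M (Mi σ) = σ := by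
  ext x
  simp [M_apply, Mi_apply, Fin.rev_rev]

lemma Mi_M (π : Equiv.Perm (Fin (m + 2))) : Mi (M π) = π := by
  ext x
  simp [M_apply, Mi_apply, Fin.rev_rev]

lemma sub_one_eq_last_iff (x : Fin (m + 2)) : x - 1 = Fin.last (m + 1) ↔ x = 0 := by
  rw [sub_eq_iff_eq_add, Fin.last_add_one]

lemma zero_sub_one : (0 : Fin (m + 2)) - 1 = Fin.last (m + 1) :=
  (sub_one_eq_last_iff 0).mpr rfl

lemma rev_eq_zero_iff (x : Fin (m + 2)) : x.rev = 0 ↔ x = Fin.last (m + 1) := by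
  rw [← Fin.rev_last (m + 1), Fin.rev_inj]

lemma ne_last_of_lt {x y : Fin (m + 2)} (h : x < y) : x ≠ Fin.last (m + 1) :=
  (h.trans_le (Fin.le_last _)).ne

lemma sub_one_lt_sub_one {x y : Fin (m + 2)} (hx : x ≠ 0) (hy : y ≠ 0) :
    x - 1 < y - 1 ↔ x < y := by
  have hx' : (x : ℕ) ≠ 0 := fun h => hx (Fin.ext h)
  have hy' : (y : ℕ) ≠ 0 := fun h => hy (Fin.ext h)
  rw [Fin.lt_def, Fin.lt_def, Fin.coe_sub_one, Fin.coe_sub_one, if_neg hx, if_neg hy]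
  omega

lemma wexc_le (n : ℕ) (π : Equiv.Perm (Fin n)) : wexc n π ≤ n := by
  unfold wexc
  exact (Finset.card_filter_le _ _).trans (by simp)

lemma mem_iff (π : Equiv.Perm (Fin (m + 2))) (i : Fin (m + 2)) :
    ((i : ℕ) ≤ (M π i : ℕ)) ↔
      ((π i.rev : ℕ) < (i.rev : ℕ) ∨ π i.rev = Fin.last (m + 1)) := by
  rw [M_apply]
  rcases eq_or_ne (π i.rev) (Fin.last (m + 1)) with h | h
  · rw [h, Fin.rev_last]
    have h1 : ((0 - 1 : Fin (m + 2)) : ℕ) = m + 1 := by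
      rw [zero_sub_one, Fin.val_last]
    rw [h1]
    have := Fin.is_le i
    simp
    omega
  · have hne : Fin.rev (π i.rev) ≠ 0 := fun hc => h ((rev_eq_zero_iff _).mp hc)
    rw [or_iff_left h, Fin.coe_sub_one, if_neg hne]
    have h1 : (Fin.rev (π i.rev) : ℕ) = (m + 2) - ((π i.rev : ℕ) + 1) := Fin.val_rev _
    have h2 : ((i.rev : ℕ)) = (m + 2) - ((i : ℕ) + 1) := Fin.val_rev _
    have h3 : (π i.rev : ℕ) ≤ m + 1 := Fin.is_le _
    have h4 : (i : ℕ) ≤ m + 1 := Fin.is_le _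
    have h5 : (π i.rev : ℕ) ≠ m + 1 := fun hc => h (Fin.ext (by rw [hc, Fin.val_last]))
    omega

lemma wexc_M (π : Equiv.Perm (Fin (m + 2))) :
    wexc (m + 2) (M π) = (m + 2) + 1 - wexc (m + 2) π := by
  have key : (Finset.univ.filter fun i : Fin (m + 2) => (i : ℕ) ≤ (M π i : ℕ)).card
      = (Finset.univ.filter fun j : Fin (m + 2) =>
          ((π j : ℕ) < (j : ℕ) ∨ π j = Fin.last (m + 1))).card := by
    apply Finset.card_bij' (fun i _ => Fin.rev i) (fun j _ => Fin.rev j)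
    · intro a ha
      simp only [Finset.mem_filter, Finset.mem_univ, true_and] at ha ⊢
      exact (mem_iff π a).mp ha
    · intro j hj
      simp only [Finset.mem_filter, Finset.mem_univ, true_and] at hj ⊢
      rw [mem_iff, Fin.rev_rev]
      exact hj
    · intro a _; exact Fin.rev_rev a
    · intro j _; exact Fin.rev_rev j
  have hdisj : Disjoint
      (Finset.univ.filter fun j : Fin (m + 2) => (π j : ℕ) < (j : ℕ))
      (Finset.univ.filter fun j : Fin (m + 2) => π j = Fin.last (m + 1)) := by
    rw [Finset.disjoint_left]
    intro a h1 h2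
    simp only [Finset.mem_filter, Finset.mem_univ, true_and] at h1 h2
    have := Fin.is_le a
    rw [h2, Fin.val_last] at h1
    omega
  have hsing : (Finset.univ.filter fun j : Fin (m + 2) => π j = Fin.last (m + 1))
      = {π.symm (Fin.last (m + 1))} := by
    ext j
    simp [Equiv.apply_eq_iff_eq_symm_apply]
  have hcompl : (Finset.univ.filter fun j : Fin (m + 2) => (π j : ℕ) < (j : ℕ))
      = Finset.univ \ (Finset.univ.filter fun j : Fin (m + 2) => (j : ℕ) ≤ (π j : ℕ)) := by
    rw [← Finset.filter_not]
    apply Finset.filter_congr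
    intro j _
    simp only [not_le]
  have hle := wexc_le (m + 2) π
  unfold wexc at *
  rw [key, Finset.filter_or, Finset.card_union_of_disjoint hdisj, hsing, hcompl,
    Finset.card_sdiff_of_subset (Finset.filter_subset _ _), Finset.card_singleton]
  simp only [Finset.card_univ, Fintype.card_fin]
  omega

lemma M_zero (π : Equiv.Perm (Fin (m + 2))) :
    M π 0 = Fin.rev (π (Fin.last (m + 1))) - 1 := by
  rw [M_apply, Fin.rev_zero]

lemma M_last (π : Equiv.Perm (Fin (m + 2))) :
    M π (Fin.last (m + 1)) = Fin.rev (π 0) - 1 := by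
  rw [M_apply, Fin.rev_last]

lemma wexc_mul_swap (σ : Equiv.Perm (Fin (m + 2)))
    (h0 : σ 0 ≠ Fin.last (m + 1)) (hl : σ (Fin.last (m + 1)) ≠ Fin.last (m + 1)) :
    wexc (m + 2) (σ * Equiv.swap 0 (Fin.last (m + 1))) = wexc (m + 2) σ := by
  unfold wexc
  congr 1
  ext i
  simp only [Finset.mem_filter, Finset.mem_univ, true_and]
  simp only [Equiv.Perm.mul_apply]
  rcases eq_or_ne i 0 with rfl | hi0
  · simp [Equiv.swap_apply_left]
  rcases eq_or_ne i (Fin.last (m + 1)) with rfl | hil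
  · rw [Equiv.swap_apply_right]
    have A : ¬ (m + 1 ≤ (σ 0 : ℕ)) := by
      intro hc
      exact h0 (Fin.ext (le_antisymm (Fin.is_le _) (by simpa using hc)))
    have B : ¬ (m + 1 ≤ (σ (Fin.last (m + 1)) : ℕ)) := by
      intro hc
      exact hl (Fin.ext (le_antisymm (Fin.is_le _) (by simpa using hc)))
    simp [A, B, Fin.val_last]
  · rw [Equiv.swap_apply_of_ne_of_ne hi0 hil]

end Stmt13Aux

namespace Stmt13Aux

variable {m : ℕ}

lemma wexc_Mi {k : ℕ} (σ : Equiv.Perm (Fin (m + 2))) (hk : wexc (m + 2) σ = (m + 2) + 1 - k)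
    (hkn : k ≤ m + 2) : wexc (m + 2) (Mi σ) = k := by
  have h1 := wexc_M (Mi σ)
  rw [M_Mi] at h1
  have h2 := wexc_le (m + 2) (Mi σ)
  omega

lemma cond_lt_iff (π : Equiv.Perm (Fin (m + 2))) :
    (∀ i j : Fin (m + 2), (i : ℕ) = 0 → (j : ℕ) = (m + 2) - 1 → π i < π j) ↔
      π 0 < π (Fin.last (m + 1)) := by
  constructor
  · intro h; exact h 0 (Fin.last (m + 1)) rfl (by simp)
  · intro h i j hi hj
    have hi' : i = 0 := Fin.ext (by simpa using hi)
    have hj' : j = Fin.last (m + 1) := Fin.ext (by rw [hj, Fin.val_last]; omega)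
    rw [hi', hj']
    exact h

lemma cond_gt_iff (π : Equiv.Perm (Fin (m + 2))) :
    (∀ i j : Fin (m + 2), (i : ℕ) = 0 → (j : ℕ) = (m + 2) - 1 → π j < π i) ↔
      π (Fin.last (m + 1)) < π 0 := by
  constructor
  · intro h; exact h 0 (Fin.last (m + 1)) rfl (by simp)
  · intro h i j hi hj
    have hi' : i = 0 := Fin.ext (by simpa using hi)
    have hj' : j = Fin.last (m + 1) := Fin.ext (by rw [hj, Fin.val_last]; omega)
    rw [hi', hj']
    exact h

end Stmt13Aux

open Stmt13Aux in
theorem stmt13 (n k : ℕ) (hn : 2 ≤ n) (hk1 : 1 ≤ k) (hkn : k ≤ n) :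
    AW n k = BW n (n + 1 - k) := by
  obtain ⟨m, rfl⟩ : ∃ m, n = m + 2 := ⟨n - 2, by omega⟩
  unfold AW BW
  apply Finset.card_bij'
    (fun π _ => if π (Fin.last (m + 1)) = Fin.last (m + 1) then M π
      else M π * Equiv.swap 0 (Fin.last (m + 1)))
    (fun σ _ => if σ 0 = Fin.last (m + 1) then Mi σ
      else Mi (σ * Equiv.swap 0 (Fin.last (m + 1))))
  · -- maps into BW set
    intro π hπ
    simp only [Finset.mem_filter, Finset.mem_univ, true_and, cond_lt_iff, cond_gt_iff] at hπ ⊢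
    obtain ⟨hw, hcond⟩ := hπ
    have hπ0 : π 0 ≠ Fin.last (m + 1) := ne_last_of_lt hcond
    have hr0 : Fin.rev (π 0) ≠ 0 := fun hc => hπ0 ((rev_eq_zero_iff _).mp hc)
    split_ifs with h
    · refine ⟨by rw [wexc_M, hw], ?_⟩
      rw [M_zero, M_last, h, Fin.rev_last, zero_sub_one, Fin.lt_def, Fin.val_last,
        Fin.coe_sub_one, if_neg hr0]
      have := Fin.is_le (Fin.rev (π 0))
      omega
    · have hrl : Fin.rev (π (Fin.last (m + 1))) ≠ 0 := fun hc => h ((rev_eq_zero_iff _).mp hc)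
      have hM0 : M π 0 ≠ Fin.last (m + 1) := by
        rw [M_zero]
        intro hc
        exact hrl ((sub_one_eq_last_iff _).mp hc)
      have hMl : M π (Fin.last (m + 1)) ≠ Fin.last (m + 1) := by
        rw [M_last]
        intro hc
        exact hr0 ((sub_one_eq_last_iff _).mp hc)
      refine ⟨by rw [wexc_mul_swap _ hM0 hMl, wexc_M, hw], ?_⟩
      simp only [Equiv.Perm.mul_apply, Equiv.swap_apply_left, Equiv.swap_apply_right]
      rw [M_zero, M_last, sub_one_lt_sub_one hrl hr0]
      rw [Fin.rev_lt_rev]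
      exact hcond
  · -- maps into AW set
    intro σ hσ
    simp only [Finset.mem_filter, Finset.mem_univ, true_and, cond_lt_iff, cond_gt_iff] at hσ ⊢
    obtain ⟨hw, hcond⟩ := hσ
    have hσl : σ (Fin.last (m + 1)) ≠ Fin.last (m + 1) := ne_last_of_lt hcond
    split_ifs with h
    · set π := Mi σ with hπ
      have hMσ : M π = σ := M_Mi σ
      have hlast : π (Fin.last (m + 1)) = Fin.last (m + 1) := by
        have h0 : M π 0 = Fin.last (m + 1) := by rw [hMσ]; exact h
        rw [M_zero] at h0
        exact (rev_eq_zero_iff _).mp ((sub_one_eq_last_iff _).mp h0)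
      refine ⟨wexc_Mi σ hw (by omega), ?_⟩
      rw [hlast]
      refine lt_of_le_of_ne (Fin.le_last _) ?_
      intro hc
      rw [← hlast] at hc
      have := π.injective hc
      exact absurd (congrArg Fin.val this) (by simp)
    · set π := Mi (σ * Equiv.swap 0 (Fin.last (m + 1))) with hπ
      have hMσ : M π = σ * Equiv.swap 0 (Fin.last (m + 1)) := M_Mi _
      have hws : wexc (m + 2) (σ * Equiv.swap 0 (Fin.last (m + 1))) = wexc (m + 2) σ :=
        wexc_mul_swap σ h hσl
      have e0 : M π 0 = σ (Fin.last (m + 1)) := by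
        rw [hMσ, Equiv.Perm.mul_apply, Equiv.swap_apply_left]
      have el : M π (Fin.last (m + 1)) = σ 0 := by
        rw [hMσ, Equiv.Perm.mul_apply, Equiv.swap_apply_right]
      have hrl : Fin.rev (π (Fin.last (m + 1))) ≠ 0 := by
        intro hc
        apply hσl
        rw [← e0, M_zero, hc, zero_sub_one]
      have hr0 : Fin.rev (π 0) ≠ 0 := by
        intro hc
        apply h
        rw [← el, M_last, hc, zero_sub_one]
      refine ⟨wexc_Mi _ (by rw [hws]; exact hw) (by omega), ?_⟩
      rw [← Fin.rev_lt_rev, ← sub_one_lt_sub_one hrl hr0, ← M_zero, ← M_last, e0, el]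
      exact hcond
  · -- left inverse
    intro π hπ
    simp only [Finset.mem_filter, Finset.mem_univ, true_and, cond_lt_iff] at hπ
    obtain ⟨hw, hcond⟩ := hπ
    have hπ0 : π 0 ≠ Fin.last (m + 1) := ne_last_of_lt hcond
    have hr0 : Fin.rev (π 0) ≠ 0 := fun hc => hπ0 ((rev_eq_zero_iff _).mp hc)
    by_cases h : π (Fin.last (m + 1)) = Fin.last (m + 1)
    · rw [if_pos h]
      have h0 : M π 0 = Fin.last (m + 1) := by
        rw [M_zero, h, Fin.rev_last, zero_sub_one]
      rw [if_pos h0, Mi_M]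
    · rw [if_neg h]
      have h0 : (M π * Equiv.swap 0 (Fin.last (m + 1))) 0 ≠ Fin.last (m + 1) := by
        rw [Equiv.Perm.mul_apply, Equiv.swap_apply_left, M_last]
        intro hc
        exact hr0 ((sub_one_eq_last_iff _).mp hc)
      rw [if_neg h0, mul_assoc, Equiv.swap_mul_self, mul_one, Mi_M]
  · -- right inverse
    intro σ hσ
    simp only [Finset.mem_filter, Finset.mem_univ, true_and, cond_gt_iff] at hσ
    obtain ⟨hw, hcond⟩ := hσ
    have hσl : σ (Fin.last (m + 1)) ≠ Fin.last (m + 1) := ne_last_of_lt hcond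
    by_cases h : σ 0 = Fin.last (m + 1)
    · rw [if_pos h]
      have hlast : Mi σ (Fin.last (m + 1)) = Fin.last (m + 1) := by
        have h0 : M (Mi σ) 0 = Fin.last (m + 1) := by rw [M_Mi]; exact h
        rw [M_zero] at h0
        exact (rev_eq_zero_iff _).mp ((sub_one_eq_last_iff _).mp h0)
      rw [if_pos hlast, M_Mi]
    · rw [if_neg h]
      have hlast : Mi (σ * Equiv.swap 0 (Fin.last (m + 1))) (Fin.last (m + 1)) ≠
          Fin.last (m + 1) := by
        intro hc
        apply hσl
        have h0 : M (Mi (σ * Equiv.swap 0 (Fin.last (m + 1)))) 0 = Fin.last (m + 1) := by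
          rw [M_zero, hc, Fin.rev_last, zero_sub_one]
        rw [M_Mi, Equiv.Perm.mul_apply, Equiv.swap_apply_left] at h0
        exact h0
      rw [if_neg hlast, M_Mi, mul_assoc, Equiv.swap_mul_self, mul_one]
end
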